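/- Let p > 3 be a prime and let a be a positive integer. Then for every integer d: (1) if −1 ≤ d ≤ p^a, then in ℤ/pℤ one has ∑_{k=0}^{p^a−1} 4^k·(27^k)⁻¹·binom(3k, k+d) = ((−1)^d·4^{2−d} − 7·(9d+1)·2^d)/81; (2) if p^a ≤ d ≤ 2p^a, then in ℤ/pℤ one has ∑_{k=0}^{p^a−1} 4^k·(27^k)⁻¹·binom(3k, k+d) = ((−1)^d·4^{3−d} − (9d+1)·2^d)/81. Here the powers 4^{2−d}, 4^{3−d}, 2^d are integer powers (zpow) of the invertible elements 4 and 2 of ℤ/pℤ. -/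

import Mathlib

/-
Put `N = p ^ a`, `c = 4 / 27` and `S d = ∑_{k < N} c ^ k C(3k, k + d)`. Expanding
`C(3k + 3, ·)` by Pascal's rule and telescoping over `k` gives
`c (S (d+1) + 3 S d + 3 S (d-1) + S (d-2)) = S d + c ^ N C(3N, N + d) - C(0, d)`.
Modulo `p` we have `c ^ N = c`, and by Lucas `C(3N, N + d)` is `3` for `d = N` and `0` for
the other `1 ≤ d ≤ 2N - 1`; so on that range `S` satisfies a homogeneous third-order
recurrence, except for a jump at `d = N`. Run downwards, the recurrence determines `S` from
its values `1, 0, 0` at `2N - 2, 2N - 1, 2N`. The closed form of part (2) solves the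
recurrence and has these top values, hence equals `S` on `[N - 1, 2N]`; the closed form of
part (1) solves it too, and its values at `N - 2, N - 1, N` are the ones the jump forces on `S`.
-/

/-- Binomial coefficient with an integer lower index: zero for negative lower index. -/
def ibinom (n : ℕ) (j : ℤ) : ℕ := if 0 ≤ j then n.choose j.toNat else 0

open Finset

theorem ibinom_of_lt {n : ℕ} {j : ℤ} (h : (n : ℤ) < j) : ibinom n j = 0 := by
  unfold ibinom
  split_ifs
  · exact Nat.choose_eq_zero_of_lt (by omega)
  · rfl

theorem ibinom_self (n : ℕ) : ibinom n n = 1 := by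
  simp [ibinom]

theorem ibinom_succ (n : ℕ) (j : ℤ) : ibinom (n + 1) j = ibinom n j + ibinom n (j - 1) := by
  unfold ibinom
  rcases lt_trichotomy j 0 with h | rfl | h
  · simp only [if_neg (show ¬ 0 ≤ j by omega), if_neg (show ¬ 0 ≤ j - 1 by omega)]
  · simp
  · have hj : j.toNat = (j - 1).toNat + 1 := by omega
    rw [if_pos h.le, if_pos h.le, if_pos (by omega), hj, Nat.choose_succ_succ, add_comm]

theorem ibinom_add_three (n : ℕ) (j : ℤ) :
    ibinom (n + 3) j =
      ibinom n j + 3 * ibinom n (j - 1) + 3 * ibinom n (j - 2) + ibinom n (j - 3) := by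
  simp only [ibinom_succ]
  ring_nf

section TriSum

variable {R : Type*} [CommRing R] (c : R) (N : ℕ)

def triSum (d : ℤ) : R := ∑ k ∈ range N, c ^ k * (ibinom (3 * k) (k + d) : R)

def TriRecAt (u : ℤ → R) (d : ℤ) : Prop :=
  c * (u (d + 1) + 3 * u d + 3 * u (d - 1) + u (d - 2)) = u d

theorem triSum_recurrence (d : ℤ) :
    c * (triSum c N (d + 1) + 3 * triSum c N d + 3 * triSum c N (d - 1) + triSum c N (d - 2)) =
      triSum c N d + c ^ N * ibinom (3 * N) (N + d) - ibinom 0 d := by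
  set g : ℕ → R := fun k ↦ c ^ k * (ibinom (3 * k) (k + d) : R)
  have hshift : ∀ k, g (k + 1) = c * (c ^ k * ibinom (3 * k) (k + (d + 1)) +
      3 * (c ^ k * ibinom (3 * k) (k + d)) + 3 * (c ^ k * ibinom (3 * k) (k + (d - 1))) +
      c ^ k * ibinom (3 * k) (k + (d - 2))) := fun k ↦ by
    simp only [g, show 3 * (k + 1) = 3 * k + 3 by ring, ibinom_add_three]
    push_cast
    ring_nf
  have htel := (sum_range_succ' g N).symm.trans (sum_range_succ g N)
  simp only [hshift, ← mul_sum, sum_add_distrib] at htel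
  simp only [g, pow_zero, one_mul, mul_zero, Nat.cast_zero, zero_add] at htel
  unfold triSum
  linear_combination htel

theorem triSum_eq_zero {d : ℤ} (hd : 2 * (N : ℤ) - 1 ≤ d) : triSum c N d = 0 :=
  sum_eq_zero fun k hk ↦ by
    rw [ibinom_of_lt (by push_cast; have := mem_range.1 hk; omega), Nat.cast_zero, mul_zero]

theorem triSum_two_mul_sub_two (hN : 1 ≤ N) : triSum c N (2 * N - 2) = c ^ (N - 1) := by
  rw [triSum, sum_eq_single_of_mem (N - 1) (mem_range.2 (by omega))]
  · rw [show ((N - 1 : ℕ) : ℤ) + (2 * N - 2) = ((3 * (N - 1) : ℕ) : ℤ) by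
        push_cast [hN]; ring, ibinom_self, Nat.cast_one, mul_one]
  · intro k hk _
    rw [ibinom_of_lt (by push_cast; have := mem_range.1 hk; omega), Nat.cast_zero, mul_zero]

end TriSum

theorem eq_of_triRecAt {R : Type*} [CommRing R] [IsDomain R] {c : R} (hc : c ≠ 0)
    {u v : ℤ → R} {lo hi : ℤ} (hu : ∀ d, lo ≤ d → d ≤ hi → TriRecAt c u d)
    (hv : ∀ d, lo ≤ d → d ≤ hi → TriRecAt c v d)
    (h₁ : u (hi - 1) = v (hi - 1)) (h₂ : u hi = v hi) (h₃ : u (hi + 1) = v (hi + 1)) :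
    ∀ d, lo - 2 ≤ d → d ≤ hi + 1 → u d = v d := by
  have step : ∀ d ≤ hi, lo - 1 ≤ d →
      u (d - 1) = v (d - 1) ∧ u d = v d ∧ u (d + 1) = v (d + 1) := by
    intro d hd
    induction d, hd using Int.leInductionDown with
    | base => exact fun _ ↦ ⟨h₁, h₂, h₃⟩
    | pred d hd ih =>
      intro hlo
      obtain ⟨e₁, e₂, e₃⟩ := ih (by omega)
      refine ⟨mul_left_cancel₀ hc ?_, e₁, by rwa [sub_add_cancel]⟩
      have hud := hu d (by omega) hd
      have hvd := hv d (by omega) hd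
      unfold TriRecAt at hud hvd
      rw [sub_sub, one_add_one_eq_two]
      linear_combination hud - hvd - c * (e₃ + 3 * e₂ + 3 * e₁) + e₂
  intro d hlo hhi
  obtain hd | rfl | rfl : d < hi ∨ d = hi ∨ d = hi + 1 := by omega
  · simpa using (step (d + 1) (by omega) (by omega)).1
  · exact h₂
  · exact h₃

section ClosedForm

variable {K : Type*} [Field K]

theorem four_twentySeven_eightyOne_ne_zero (h2 : (2 : K) ≠ 0) (h3 : (3 : K) ≠ 0) :
    (4 : K) ≠ 0 ∧ (27 : K) ≠ 0 ∧ (81 : K) ≠ 0 := by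
  refine ⟨?_, ?_, ?_⟩
  · rw [show (4 : K) = 2 ^ 2 by norm_num]; exact pow_ne_zero _ h2
  · rw [show (27 : K) = 3 ^ 3 by norm_num]; exact pow_ne_zero _ h3
  · rw [show (81 : K) = 3 ^ 4 by norm_num]; exact pow_ne_zero _ h3

/- The characteristic polynomial of `TriRecAt (4 / 27)` is `4 (x + 1) ^ 3 - 27 x ^ 2 =
(x - 2) ^ 2 (4 x + 1)`, so its solutions are `A (-1/4) ^ d + (B d + C) 2 ^ d`. -/
def closedForm (e : ℤ) (m : K) (d : ℤ) : K :=
  ((-1 : K) ^ d * (4 : K) ^ (e - d) - m * ((9 * d + 1 : ℤ) : K) * (2 : K) ^ d) * (81 : K)⁻¹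

theorem triRecAt_closedForm (h2 : (2 : K) ≠ 0) (h3 : (3 : K) ≠ 0) (e : ℤ) (m : K) (d : ℤ) :
    TriRecAt (4 / 27) (closedForm e m) d := by
  obtain ⟨h4, h27, h81⟩ := four_twentySeven_eightyOne_ne_zero h2 h3
  have h1 : (-1 : K) ≠ 0 := neg_ne_zero.2 one_ne_zero
  simp only [TriRecAt, closedForm, show e - (d + 1) = e - d - 1 by ring,
    show e - (d - 1) = e - d + 1 by ring, show e - (d - 2) = e - d + 2 by ring,
    zpow_add₀ h1, zpow_sub₀ h1, zpow_add₀ h2, zpow_sub₀ h2, zpow_add₀ h4, zpow_sub₀ h4,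
    zpow_one, zpow_two]
  push_cast
  field_simp
  ring

end ClosedForm

theorem choose_mul_prime_pow_cast (p : ℕ) [hp : Fact p.Prime] (m a k : ℕ) :
    (((m * p ^ a).choose k : ℕ) : ZMod p) =
      if p ^ a ∣ k then ((m.choose (k / p ^ a) : ℕ) : ZMod p) else 0 := by
  induction a generalizing k with
  | zero => simp
  | succ a ih =>
    have hlucas := (ZMod.natCast_eq_natCast_iff _ _ _).2
      (Choose.choose_modEq_choose_mod_mul_choose_div_nat (p := p) (n := m * p ^ (a + 1)) (k := k))
    rw [hlucas, pow_succ, ← mul_assoc, Nat.mul_mod_left, Nat.mul_div_cancel _ hp.out.pos,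
      Nat.cast_mul, ih]
    by_cases hk : p ∣ k
    · rw [Nat.mod_eq_zero_of_dvd hk, Nat.choose_zero_right, Nat.cast_one, one_mul,
        Nat.div_div_eq_div_mul, mul_comm p]
      simp only [Nat.dvd_div_iff_mul_dvd hk, mul_comm p]
    · rw [Nat.choose_eq_zero_of_lt (Nat.pos_of_ne_zero (mt Nat.dvd_of_mod_eq_zero hk)),
        Nat.cast_zero, zero_mul, if_neg (fun h ↦ hk (dvd_trans (dvd_mul_left p _) h))]

section ZModPrimePow

variable {p : ℕ} [hp : Fact p.Prime] {a : ℕ}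

theorem ZMod.natCast_ne_zero_of_lt {n : ℕ} (h0 : 0 < n) (hn : n < p) : (n : ZMod p) ≠ 0 :=
  (ZMod.natCast_eq_zero_iff n p).not.2 (Nat.not_dvd_of_pos_of_lt h0 hn)

theorem ibinom_three_mul_prime_pow {d : ℤ} (hd₁ : 1 ≤ d)
    (hd₂ : d ≤ 2 * (p ^ a : ℕ) - 1) :
    (ibinom (3 * p ^ a) ((p ^ a : ℕ) + d) : ZMod p) = if d = (p ^ a : ℕ) then 3 else 0 := by
  have hpos : 0 < p ^ a := pow_pos hp.out.pos a
  obtain ⟨j, rfl⟩ : ∃ j : ℕ, d = j := ⟨d.toNat, by omega⟩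
  rw [ibinom, if_pos (by omega), show ((p ^ a : ℕ) + (j : ℤ)).toNat = p ^ a + j by omega,
    choose_mul_prime_pow_cast]
  by_cases hj : j = p ^ a
  · subst hj
    rw [if_pos ⟨2, by ring⟩, if_pos rfl, show (p ^ a + p ^ a) / p ^ a = 2 by
      rw [← two_mul, Nat.mul_div_cancel _ hpos]]
    norm_num
  · have hndvd : ¬ p ^ a ∣ p ^ a + j := by
      rw [Nat.dvd_add_right dvd_rfl]
      rintro ⟨q, rfl⟩
      obtain _ | _ | q := q
      · omega
      · simp at hj
      · push_cast at hd₂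
        nlinarith
    rw [if_neg hndvd, if_neg (by exact_mod_cast hj)]

theorem triSum_recurrence_prime_pow {d : ℤ} (hd₁ : 1 ≤ d)
    (hd₂ : d ≤ 2 * (p ^ a : ℕ) - 1) :
    4 / 27 * (triSum (4 / 27 : ZMod p) (p ^ a) (d + 1) + 3 * triSum (4 / 27) (p ^ a) d +
        3 * triSum (4 / 27) (p ^ a) (d - 1) + triSum (4 / 27) (p ^ a) (d - 2)) =
      triSum (4 / 27) (p ^ a) d + if d = (p ^ a : ℕ) then 3 * (4 / 27) else 0 := by
  rw [triSum_recurrence, ZMod.pow_card_pow, ibinom_three_mul_prime_pow hd₁ hd₂,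
    ibinom_of_lt (by omega)]
  split_ifs <;> ring

theorem closedForm_prime_pow_add (hp2 : p ≠ 2) (ha : 0 < a) (e : ℤ) (m : ZMod p) (t : ℤ) :
    closedForm e m ((p ^ a : ℕ) + t) = -closedForm (e - 1) (-2 * m) t := by
  have h1 : (-1 : ZMod p) ≠ 0 := neg_ne_zero.2 one_ne_zero
  have h2 : (2 : ZMod p) ≠ 0 := by
    exact_mod_cast ZMod.natCast_ne_zero_of_lt two_pos (lt_of_le_of_ne hp.out.two_le (Ne.symm hp2))
  have h4 : (4 : ZMod p) ≠ 0 := by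
    rw [show (4 : ZMod p) = 2 ^ 2 by norm_num]; exact pow_ne_zero _ h2
  have hodd : Odd (p ^ a) := (hp.out.odd_of_ne_two hp2).pow
  simp only [closedForm, show e - ((p ^ a : ℕ) + t) = e - 1 - t + 1 - (p ^ a : ℕ) by ring,
    zpow_add₀ h1, zpow_add₀ h2, zpow_add₀ h4, zpow_sub₀ h4, zpow_natCast, ZMod.pow_card_pow,
    hodd.neg_one_pow, zpow_one]
  push_cast [ZMod.natCast_self, zero_pow ha.ne']
  field_simp
  ring

theorem closedForm_two_mul_prime_pow_add (hp2 : p ≠ 2) (ha : 0 < a) (e : ℤ) (m : ZMod p)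
    (t : ℤ) : closedForm e m (2 * (p ^ a : ℕ) + t) = closedForm (e - 2) (4 * m) t := by
  rw [two_mul, add_assoc, closedForm_prime_pow_add hp2 ha, closedForm_prime_pow_add hp2 ha]
  ring_nf

theorem triSum_eq_closedForm_of_le_two_mul (hp3 : 3 < p) (ha : 0 < a) {d : ℤ}
    (hd₁ : (p ^ a : ℕ) - 1 ≤ d) (hd₂ : d ≤ 2 * (p ^ a : ℕ)) :
    triSum (4 / 27 : ZMod p) (p ^ a) d = closedForm 3 1 d := by
  have h2 : (2 : ZMod p) ≠ 0 := by exact_mod_cast ZMod.natCast_ne_zero_of_lt two_pos (by omega)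
  have h3 : (3 : ZMod p) ≠ 0 := by exact_mod_cast ZMod.natCast_ne_zero_of_lt three_pos hp3
  obtain ⟨h4, h27, h81⟩ := four_twentySeven_eightyOne_ne_zero h2 h3
  have hc : (4 / 27 : ZMod p) ≠ 0 := div_ne_zero h4 h27
  have hN : p ≤ p ^ a := Nat.le_self_pow ha.ne' p
  have hcN : (4 / 27 : ZMod p) ^ (p ^ a - 1) = 1 := by
    rw [← mul_left_inj' hc, ← pow_succ, Nat.sub_add_cancel (by omega), ZMod.pow_card_pow,
      one_mul]
  have hp2 : p ≠ 2 := by omega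
  set N : ℤ := ((p ^ a : ℕ) : ℤ)
  refine eq_of_triRecAt (lo := N + 1) (hi := 2 * N - 1) hc (fun e he₁ he₂ ↦ ?_)
    (fun e _ _ ↦ triRecAt_closedForm h2 h3 3 1 e) ?_ ?_ ?_ d (by omega) (by omega)
  · have h := triSum_recurrence_prime_pow (p := p) (a := a) (d := e) (by omega) he₂
    rwa [if_neg (by omega), add_zero] at h
  · rw [show 2 * N - 1 - 1 = 2 * N + -2 by ring, ← sub_eq_add_neg,
      triSum_two_mul_sub_two _ _ (by omega), hcN, sub_eq_add_neg,
      closedForm_two_mul_prime_pow_add hp2 ha]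
    norm_num [closedForm]
    field_simp
    norm_num
  · rw [triSum_eq_zero _ _ le_rfl, sub_eq_add_neg, closedForm_two_mul_prime_pow_add hp2 ha]
    norm_num [closedForm]
    field_simp
    norm_num
  · rw [sub_add_cancel, triSum_eq_zero _ _ (by omega), ← add_zero (2 * N),
      closedForm_two_mul_prime_pow_add hp2 ha]
    norm_num [closedForm]

theorem triSum_eq_closedForm_of_le (hp3 : 3 < p) (ha : 0 < a) {d : ℤ}
    (hd₁ : -1 ≤ d) (hd₂ : d ≤ (p ^ a : ℕ)) :
    triSum (4 / 27 : ZMod p) (p ^ a) d = closedForm 2 7 d := by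
  have h2 : (2 : ZMod p) ≠ 0 := by exact_mod_cast ZMod.natCast_ne_zero_of_lt two_pos (by omega)
  have h3 : (3 : ZMod p) ≠ 0 := by exact_mod_cast ZMod.natCast_ne_zero_of_lt three_pos hp3
  obtain ⟨h4, h27, h81⟩ := four_twentySeven_eightyOne_ne_zero h2 h3
  have hc : (4 / 27 : ZMod p) ≠ 0 := div_ne_zero h4 h27
  have hN : p ≤ p ^ a := Nat.le_self_pow ha.ne' p
  have hp2 : p ≠ 2 := by omega
  set N : ℤ := ((p ^ a : ℕ) : ℤ)
  have upper := fun e (he₁ : N - 1 ≤ e) (he₂ : e ≤ 2 * N) ↦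
    triSum_eq_closedForm_of_le_two_mul hp3 ha he₁ he₂
  refine eq_of_triRecAt (lo := 1) (hi := N - 1) hc (fun e he₁ he₂ ↦ ?_)
    (fun e _ _ ↦ triRecAt_closedForm h2 h3 2 7 e) ?_ ?_ ?_ d (by omega) (by omega)
  · have h := triSum_recurrence_prime_pow (p := p) (a := a) (d := e) he₁ (by omega)
    rwa [if_neg (by omega), add_zero] at h
  · have hS := triSum_recurrence_prime_pow (p := p) (a := a) (d := N) (by omega) (by omega)
    rw [if_pos rfl, upper (N + 1) (by omega) (by omega), upper N (by omega) (by omega),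
      upper (N - 1) le_rfl (by omega)] at hS
    have hF := triRecAt_closedForm h2 h3 3 1 N
    have hjump : closedForm 2 (7 : ZMod p) (N - 2) = closedForm 3 1 (N - 2) + 3 := by
      rw [sub_eq_add_neg, closedForm_prime_pow_add hp2 ha, closedForm_prime_pow_add hp2 ha]
      norm_num [closedForm]
      field_simp
      norm_num
    rw [sub_sub, one_add_one_eq_two, hjump]
    unfold TriRecAt at hF
    apply mul_left_cancel₀ hc
    linear_combination hS - hF
  · rw [upper _ le_rfl (by omega), sub_eq_add_neg,
      closedForm_prime_pow_add hp2 ha, closedForm_prime_pow_add hp2 ha]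
    norm_num [closedForm]
    field_simp
    norm_num
  · rw [sub_add_cancel, upper _ (by omega) (by omega), ← add_zero N,
      closedForm_prime_pow_add hp2 ha, closedForm_prime_pow_add hp2 ha]
    norm_num [closedForm]

end ZModPrimePow

theorem stmt_16 (p : ℕ) [Fact p.Prime] (hp3 : 3 < p) (a : ℕ) (ha : 0 < a) (d : ℤ) :
    (-1 ≤ d → d ≤ (p : ℤ) ^ a →
      (∑ k ∈ Finset.range (p ^ a),
          (4 : ZMod p) ^ k * ((27 : ZMod p) ^ k)⁻¹ * (ibinom (3 * k) ((k : ℤ) + d) : ZMod p)) =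
        ((-1 : ZMod p) ^ d * (4 : ZMod p) ^ (2 - d) -
            7 * ((9 * d + 1 : ℤ) : ZMod p) * (2 : ZMod p) ^ d) * (81 : ZMod p)⁻¹) ∧
    ((p : ℤ) ^ a ≤ d → d ≤ 2 * (p : ℤ) ^ a →
      (∑ k ∈ Finset.range (p ^ a),
          (4 : ZMod p) ^ k * ((27 : ZMod p) ^ k)⁻¹ * (ibinom (3 * k) ((k : ℤ) + d) : ZMod p)) =
        ((-1 : ZMod p) ^ d * (4 : ZMod p) ^ (3 - d) -
            ((9 * d + 1 : ℤ) : ZMod p) * (2 : ZMod p) ^ d) * (81 : ZMod p)⁻¹) := by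
  have hsum : ∑ k ∈ Finset.range (p ^ a),
      (4 : ZMod p) ^ k * ((27 : ZMod p) ^ k)⁻¹ * (ibinom (3 * k) ((k : ℤ) + d) : ZMod p) =
      triSum (4 / 27) (p ^ a) d := by
    simp only [triSum, mul_pow, inv_pow, div_eq_mul_inv]
  have hN : ((p ^ a : ℕ) : ℤ) = (p : ℤ) ^ a := Nat.cast_pow p a
  refine ⟨fun hd₁ hd₂ ↦ ?_, fun hd₁ hd₂ ↦ ?_⟩
  · rw [hsum, triSum_eq_closedForm_of_le hp3 ha hd₁ (hN ▸ hd₂), closedForm]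
  · rw [hsum, triSum_eq_closedForm_of_le_two_mul hp3 ha (by omega) (hN ▸ hd₂), closedForm,
      one_mul]
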